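/- Scaled Hankel–Laplace identity: for all a > 0 and ρ > 0, ∫₀^∞ e^{−a k} J₀(ρ k) dk = 1/√(a² + ρ²). -/

import Mathlib

/-!
Writing `J₀(ρk) = (2π)⁻¹ ∫₀^{2π} cos (ρ k sin θ) dθ` and exchanging the integrals (the integrand is
dominated by `e^{-ak}`), the inner Laplace transform is `∫₀^∞ e^{-ak} cos (bk) dk = a / (a² + b²)` with
`b = ρ sin θ`. What remains is `∫₀^{2π} a / (a² + ρ² sin² θ) dθ = 2π / √(a² + ρ²)`, which follows from
an explicit primitive that is smooth on the whole line.
-/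

open MeasureTheory

/-- The zeroth-order Bessel function of the first kind,
`J₀(r) = (1/2π) ∫₀^{2π} e^{i r sin θ} dθ` (this integral is real). -/
noncomputable def besselJ0 (r : ℝ) : ℝ :=
  ((1 / (2 * Real.pi) : ℂ) *
    ∫ θ in (0 : ℝ)..(2 * Real.pi), Complex.exp (Complex.I * r * Real.sin θ)).re

open Real Set

theorem besselJ0_eq_integral_cos (r : ℝ) :
    besselJ0 r = (2 * π)⁻¹ * ∫ θ in (0 : ℝ)..2 * π, cos (r * sin θ) := by
  have hexp : ∀ θ : ℝ, cos (r * sin θ) = RCLike.re (Complex.exp (Complex.I * r * sin θ)) := by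
    intro θ; simp [Complex.exp_re, -Complex.ofReal_sin]
  have hint : IntervalIntegrable (fun θ : ℝ => Complex.exp (Complex.I * r * sin θ)) volume 0 (2 * π) :=
    (by fun_prop : Continuous _).intervalIntegrable _ _
  simp_rw [besselJ0, hexp, intervalIntegral.intervalIntegral_re hint, one_div, ← Complex.ofReal_ofNat,
    ← Complex.ofReal_mul, ← Complex.ofReal_inv, Complex.re_ofReal_mul]
  rfl

theorem integral_exp_neg_mul_mul_cos {a : ℝ} (ha : 0 < a) (b : ℝ) :
    ∫ k in Ioi (0 : ℝ), exp (-a * k) * cos (b * k) = a / (a ^ 2 + b ^ 2) := by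
  set z : ℂ := -a + b * Complex.I
  have hz : z.re < 0 := by simpa [z] using ha
  have hre : ∀ k : ℝ, exp (-a * k) * cos (b * k) = RCLike.re (Complex.exp (z * k)) := by
    intro k; simp [z, Complex.exp_re]
  simp_rw [hre]
  rw [integral_re (integrableOn_exp_mul_complex_Ioi hz 0), integral_exp_mul_complex_Ioi hz 0]
  simp [z, Complex.div_re, Complex.normSq_apply, field]

theorem mul_cos_sq_add_mul_sin_sq_pos {p q : ℝ} (hp : 0 < p) (hq : 0 < q) (θ : ℝ) :
    0 < p * cos θ ^ 2 + q * sin θ ^ 2 := by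
  nlinarith [sin_sq_add_cos_sq θ, min_le_left p q, min_le_right p q, lt_min hp hq,
    sq_nonneg (sin θ), sq_nonneg (cos θ)]

/-- `θ + arctan (((c - a) sin θ cos θ) / (a cos² θ + c sin² θ))` is `arctan ((c / a) tan θ)` with the
jumps at the zeros of `cos` removed, so it is a primitive on all of `ℝ`. -/
theorem hasDerivAt_add_arctan_sin_mul_cos_div {a c : ℝ} (ha : 0 < a) (hc : 0 < c) (θ : ℝ) :
    HasDerivAt (fun θ => θ + arctan ((c - a) * sin θ * cos θ / (a * cos θ ^ 2 + c * sin θ ^ 2)))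
      (a * c / (a ^ 2 * cos θ ^ 2 + c ^ 2 * sin θ ^ 2)) θ := by
  have hD := mul_cos_sq_add_mul_sin_sq_pos ha hc θ
  have hD' := mul_cos_sq_add_mul_sin_sq_pos (pow_pos ha 2) (pow_pos hc 2) θ
  have hN := (((hasDerivAt_sin θ).const_mul (c - a)).fun_mul (hasDerivAt_cos θ)).fun_div
    (((hasDerivAt_cos θ).fun_pow 2).const_mul a |>.fun_add (((hasDerivAt_sin θ).fun_pow 2).const_mul c))
    hD.ne'
  refine ((hasDerivAt_id' θ).add hN.arctan).congr_deriv ?_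
  have hpyth := sin_sq_add_cos_sq θ
  field_simp
  linear_combination c * a * (a ^ 2 * cos θ ^ 2 + c ^ 2 * sin θ ^ 2) * (sin θ ^ 2 + cos θ ^ 2) * hpyth

theorem integral_div_sq_add_mul_sin_sq {a : ℝ} (ha : 0 < a) (b : ℝ) :
    ∫ θ in (0 : ℝ)..2 * π, a / (a ^ 2 + (b * sin θ) ^ 2) = 2 * π / √(a ^ 2 + b ^ 2) := by
  set c := √(a ^ 2 + b ^ 2)
  have hc : 0 < c := by positivity
  have hc2 : c ^ 2 = a ^ 2 + b ^ 2 := sq_sqrt (by positivity)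
  have hderiv : ∀ θ : ℝ, HasDerivAt
      (fun θ => (θ + arctan ((c - a) * sin θ * cos θ / (a * cos θ ^ 2 + c * sin θ ^ 2))) / c)
      (a / (a ^ 2 + (b * sin θ) ^ 2)) θ := by
    intro θ
    refine ((hasDerivAt_add_arctan_sin_mul_cos_div ha hc θ).div_const c).congr_deriv ?_
    have hdenom : a ^ 2 * cos θ ^ 2 + c ^ 2 * sin θ ^ 2 = a ^ 2 + (b * sin θ) ^ 2 := by
      rw [hc2, cos_sq']; ring
    rw [hdenom]
    field_simp
  have hcont : Continuous fun θ => a / (a ^ 2 + (b * sin θ) ^ 2) :=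
    continuous_const.div (by fun_prop) fun θ => by positivity
  rw [intervalIntegral.integral_eq_sub_of_hasDerivAt (fun θ _ => hderiv θ)
    (hcont.intervalIntegrable _ _)]
  simp

theorem integrable_exp_neg_mul_cos_prod {a : ℝ} (ha : 0 < a) {φ : ℝ × ℝ → ℝ}
    (hφ : Measurable φ) (s : Set ℝ) (hs : volume s ≠ ⊤) :
    Integrable (fun p : ℝ × ℝ => exp (-a * p.1) * cos (φ p))
      ((volume.restrict (Ioi 0)).prod (volume.restrict s)) := by
  have hdom : Integrable (fun p : ℝ × ℝ => exp (-a * p.1) * 1)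
      ((volume.restrict (Ioi 0)).prod (volume.restrict s)) :=
    (exp_neg_integrableOn_Ioi 0 ha).mul_prod (integrableOn_const hs)
  refine hdom.mono' (by fun_prop) (Filter.Eventually.of_forall fun p => ?_)
  rw [norm_mul, norm_of_nonneg (exp_pos _).le]
  exact mul_le_mul_of_nonneg_left (abs_cos_le_one _) (exp_pos _).le

theorem laplace_hankel_J0_scaled_general (a ρ : ℝ) (ha : 0 < a) :
    (∫ k in Set.Ioi (0 : ℝ), Real.exp (-a * k) * besselJ0 (ρ * k))
      = 1 / Real.sqrt (a ^ 2 + ρ ^ 2) := by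
  have h2π : (0 : ℝ) ≤ 2 * π := by positivity
  calc ∫ k in Ioi (0 : ℝ), exp (-a * k) * besselJ0 (ρ * k)
      = ∫ k in Ioi (0 : ℝ), (2 * π)⁻¹ *
          ∫ θ in Ioc 0 (2 * π), exp (-a * k) * cos (ρ * sin θ * k) := by
        refine integral_congr_ae (Filter.Eventually.of_forall fun k => ?_)
        simp only [besselJ0_eq_integral_cos, intervalIntegral.integral_of_le h2π, mul_right_comm ρ k,
          mul_left_comm (exp (-a * k)), integral_const_mul]
    _ = (2 * π)⁻¹ * ∫ θ in Ioc 0 (2 * π), ∫ k in Ioi (0 : ℝ), exp (-a * k) * cos (ρ * sin θ * k) := by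
        rw [integral_const_mul, integral_integral_swap
          (integrable_exp_neg_mul_cos_prod ha (by fun_prop) _ measure_Ioc_lt_top.ne)]
    _ = (2 * π)⁻¹ * ∫ θ in (0 : ℝ)..2 * π, a / (a ^ 2 + (ρ * sin θ) ^ 2) := by
        simp_rw [integral_exp_neg_mul_mul_cos ha, intervalIntegral.integral_of_le h2π]
    _ = 1 / √(a ^ 2 + ρ ^ 2) := by
        rw [integral_div_sq_add_mul_sin_sq ha]
        field_simp

/-- scaled Hankel–Laplace identity
`∫₀^∞ e^{-a k} J₀(ρ k) dk = 1/√(a² + ρ²)` for `a, ρ > 0`. -/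
theorem laplace_hankel_J0_scaled (a ρ : ℝ) (ha : 0 < a) (hρ : 0 < ρ) :
    (∫ k in Set.Ioi (0 : ℝ), Real.exp (-a * k) * besselJ0 (ρ * k))
      = 1 / Real.sqrt (a ^ 2 + ρ ^ 2) :=
  laplace_hankel_J0_scaled_general a ρ ha
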